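/- arXiv:1205.0576 — 5 statements merged into one kernel-verified Lean document; each statement's English description precedes it below -/
import Mathlib

section
/- Let B be a binomial ring, n a natural number, and F a polynomial functor of degree n from finitely generated free B-modules to B-modules. If F(B^n) is the zero module, then F(M) is the zero module for every finitely generated free B-module M; that is, F is identically zero. -/
open Finset

universe u

variable (B : Type u) [CommRing B] [BinomialRing B]

/-- A finitely generated free `B`-module. -/
structure FGFree (B : Type u) [CommRing B] : Type (u + 1) where
  carrier : Type u
  [isAddCommGroup : AddCommGroup carrier]
  [isModule : Module B carrier]
  [isFree : Module.Free B carrier]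
  [isFinite : Module.Finite B carrier]

attribute [instance] FGFree.isAddCommGroup FGFree.isModule FGFree.isFree FGFree.isFinite

instance : CoeSort (FGFree B) (Type u) := ⟨FGFree.carrier⟩

/-- A (not necessarily additive) functor from f.g. free `B`-modules to `B`-modules. -/
structure ModFunctor (B : Type u) [CommRing B] : Type (u + 1) where
  obj : FGFree B → ModuleCat.{u} B
  map : ∀ {M N : FGFree B}, (M →ₗ[B] N) → (obj M →ₗ[B] obj N)
  map_id : ∀ (M : FGFree B), map (LinearMap.id : M →ₗ[B] M) = LinearMap.id
  map_comp : ∀ {M N P : FGFree B} (f : M →ₗ[B] N) (g : N →ₗ[B] P),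
    map (g ∘ₗ f) = map g ∘ₗ map f

/-- The deviation of a family of homomorphisms: `∑_{I ⊆ [k]} (−1)^{k−|I|} F(∑_{i∈I} α_i)`. -/
noncomputable def ModFunctor.dev (F : ModFunctor B) {M N : FGFree B} {k : ℕ}
    (α : Fin k → (M →ₗ[B] N)) : (F.obj M →ₗ[B] F.obj N) :=
  ∑ I : Finset (Fin k), (-1 : ℤ) ^ (k - I.card) • F.map (∑ i ∈ I, α i)

/-- `F` is polynomial of degree (at most) `n`: every `n`-th deviation vanishes. -/
def ModFunctor.IsPolynomial (F : ModFunctor B) (n : ℕ) : Prop :=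
  ∀ (M N : FGFree B) (α : Fin (n + 1) → (M →ₗ[B] N)), F.dev B α = 0

/-- The `k`-fold deviation `Δ_k F(α) = ∑_{j=0}^{k} (−1)^{k−j} C(k,j) F(j·α)`. -/
noncomputable def ModFunctor.delta (F : ModFunctor B) {M N : FGFree B} (k : ℕ)
    (α : M →ₗ[B] N) : (F.obj M →ₗ[B] F.obj N) :=
  ∑ j ∈ Finset.range (k + 1), ((-1 : ℤ) ^ (k - j) * (k.choose j : ℤ)) • F.map ((j : B) • α)

/-- `F` is numerical of degree (at most) `n`. -/
def ModFunctor.IsNumerical (F : ModFunctor B) (n : ℕ) : Prop :=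
  F.IsPolynomial B n ∧
    ∀ (M N : FGFree B) (α : M →ₗ[B] N) (r : B),
      F.map (r • α) = ∑ k ∈ Finset.range (n + 1), Ring.choose r k • F.delta B k α

/-- The standard free module `B^n`. -/
def FGFree.std (n : ℕ) : FGFree B := ⟨Fin n → B⟩

/-!
Induction on the rank `m` of `B^m`. For `m ≤ n`, `B^m` is a retract of `B^n`. For `m > n`,
split the identity of `B^m` into `n + 1` coordinate projections onto nonempty blocks of
coordinates: `F` of every proper partial sum factors through a free module of smaller rank, so
it vanishes, and the vanishing `n`-th deviation of the projections reduces to `F(id) = 0`.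
Every finitely generated free module is isomorphic to some `B^m`.
-/

namespace LinearMap

variable (R : Type*) [Semiring R] {ι κ : Type*}

theorem funLeft_comp_extendByZero {f : ι → κ} (hf : Function.Injective f) :
    funLeft R R f ∘ₗ Function.ExtendByZero.linearMap R f = id := by
  ext v i
  simp [funLeft, hf.extend_apply]

/-- Defined through `s → R` so that it visibly factors through that module. -/
noncomputable def piIndicator (s : Set ι) : (ι → R) →ₗ[R] ι → R :=
  Function.ExtendByZero.linearMap R ((↑) : s → ι) ∘ₗ funLeft R R (↑)

variable {R}

theorem piIndicator_apply (s : Set ι) (v : ι → R) : piIndicator R s v = s.indicator v := by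
  ext j
  by_cases hj : j ∈ s
  · simpa [piIndicator, funLeft, hj] using
      Subtype.val_injective.extend_apply (v ∘ Subtype.val) (0 : ι → R) ⟨j, hj⟩
  · rw [Set.indicator_of_notMem hj]
    exact Function.extend_apply' _ _ _ fun ⟨x, hx⟩ => hj (hx ▸ x.2)

theorem sum_piIndicator_fiber {α : Type*} (c : ι → α) (I : Finset α) :
    ∑ a ∈ I, piIndicator R (c ⁻¹' {a}) = piIndicator R (c ⁻¹' I) := by
  classical
  ext v j
  simp [piIndicator_apply, Set.indicator_apply, Finset.sum_apply]

theorem piIndicator_univ : piIndicator R (Set.univ : Set ι) = id := by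
  ext v
  simp [piIndicator_apply]

end LinearMap

/-- The free module `ι → R` on a finite type `ι`. -/
abbrev FGFree.pi {R : Type u} [CommRing R] (ι : Type u) [Finite ι] : FGFree R := ⟨ι → R⟩

namespace ModFunctor

variable {R : Type u} [CommRing R] (F : ModFunctor R)

theorem subsingleton_obj_of_retract {M N : FGFree R} (i : M →ₗ[R] N) (r : N →ₗ[R] M)
    (hri : r ∘ₗ i = LinearMap.id) [Subsingleton (F.obj N)] : Subsingleton (F.obj M) := by
  have hinv : Function.LeftInverse (F.map r) (F.map i) := fun x => by
    rw [← LinearMap.comp_apply, ← F.map_comp, hri, F.map_id, LinearMap.id_apply]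
  exact hinv.injective.subsingleton

theorem map_comp_eq_zero {M P N : FGFree R} (f : M →ₗ[R] P) (g : P →ₗ[R] N)
    [Subsingleton (F.obj P)] : F.map (g ∘ₗ f) = 0 := by
  ext x
  simp [F.map_comp, Subsingleton.elim (F.map f x) 0]

theorem subsingleton_obj_of_map_id_eq_zero {M : FGFree R}
    (h : F.map (LinearMap.id : M →ₗ[R] M) = 0) : Subsingleton (F.obj M) :=
  subsingleton_of_forall_eq 0 fun x => by
    simpa [F.map_id] using LinearMap.congr_fun h x

theorem map_sum_eq_zero {n : ℕ} (hF : F.IsPolynomial R n) {M N : FGFree R}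
    (α : Fin (n + 1) → (M →ₗ[R] N))
    (hα : ∀ I ≠ Finset.univ, F.map (∑ i ∈ I, α i) = 0) : F.map (∑ i, α i) = 0 := by
  have hdev := hF M N α
  rw [ModFunctor.dev, Finset.sum_eq_single Finset.univ (fun I _ hI => by rw [hα I hI, smul_zero])
    (by simp)] at hdev
  simpa using hdev

theorem subsingleton_obj_pi_of_card_le {n : ℕ} (h : Subsingleton (F.obj (FGFree.std R n)))
    {ι : Type u} [Finite ι] (hι : Nat.card ι ≤ n) : Subsingleton (F.obj (FGFree.pi ι)) := by
  have := Fintype.ofFinite ι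
  obtain ⟨f⟩ := Function.Embedding.nonempty_of_card_le (α := ι) (β := Fin n)
    (by rwa [Fintype.card_fin, Fintype.card_eq_nat_card])
  exact F.subsingleton_obj_of_retract (M := FGFree.pi ι) (N := FGFree.std R n)
    (Function.ExtendByZero.linearMap R f) (LinearMap.funLeft R R f)
    (LinearMap.funLeft_comp_extendByZero R f.injective)

theorem subsingleton_obj_pi_of_proper {n : ℕ} (hF : F.IsPolynomial R n) {ι : Type u} [Finite ι]
    (hι : n < Nat.card ι)
    (h : ∀ s : Set ι, s ≠ Set.univ → Subsingleton (F.obj (FGFree.pi s))) :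
    Subsingleton (F.obj (FGFree.pi ι)) := by
  have := Fintype.ofFinite ι
  obtain ⟨g⟩ := Function.Embedding.nonempty_of_card_le (α := Fin (n + 1)) (β := ι)
    (by rwa [Fintype.card_fin, Fintype.card_eq_nat_card, Nat.succ_le_iff])
  let c := Function.invFun g
  have hc : Function.Surjective c := Function.invFun_surjective g.injective
  apply subsingleton_obj_of_map_id_eq_zero
  rw [← LinearMap.piIndicator_univ, ← Set.preimage_univ (f := c), ← Finset.coe_univ,
    ← LinearMap.sum_piIndicator_fiber]
  refine F.map_sum_eq_zero hF _ fun I hI => ?_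
  obtain ⟨a, ha⟩ : ∃ a, a ∉ I := by simpa [Finset.eq_univ_iff_forall] using hI
  obtain ⟨j, rfl⟩ := hc a
  have := h (c ⁻¹' I) fun hs => ha (hs.symm ▸ Set.mem_univ j :)
  rw [LinearMap.sum_piIndicator_fiber]
  exact F.map_comp_eq_zero (P := FGFree.pi (c ⁻¹' I)) _ _

theorem subsingleton_obj_pi {n : ℕ} (hF : F.IsPolynomial R n)
    (h : Subsingleton (F.obj (FGFree.std R n))) (ι : Type u) [Finite ι] :
    Subsingleton (F.obj (FGFree.pi ι)) := by
  induction hm : Nat.card ι using Nat.strong_induction_on generalizing ι with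
  | _ m ih =>
    rcases le_or_gt m n with hle | hlt
    · exact F.subsingleton_obj_pi_of_card_le h (hm ▸ hle)
    · refine F.subsingleton_obj_pi_of_proper hF (hm ▸ hlt) fun s hs => ?_
      obtain ⟨j, hj⟩ := (Set.ne_univ_iff_exists_notMem s).1 hs
      exact ih _ (hm ▸ Finite.card_subtype_lt hj) s rfl

end ModFunctor

theorem polynomial_functor_vanishing_general (B : Type u) [CommRing B]
    (n : ℕ) (F : ModFunctor B) (hF : F.IsPolynomial B n)
    (h : Subsingleton (F.obj (FGFree.std B n))) :
    ∀ M : FGFree B, Subsingleton (F.obj M) := by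
  intro M
  have := F.subsingleton_obj_pi hF h (Module.Free.ChooseBasisIndex B M)
  let e := (Module.Free.chooseBasis B M).equivFun
  exact F.subsingleton_obj_of_retract (N := FGFree.pi _) e.toLinearMap e.symm.toLinearMap
    e.symm_comp

/-- A polynomial functor of degree `n` that vanishes on `B^n` is identically zero. -/
theorem polynomial_functor_vanishing (B : Type u) [CommRing B] [BinomialRing B]
    (n : ℕ) (F : ModFunctor B) (hF : F.IsPolynomial B n)
    (h : Subsingleton (F.obj (FGFree.std B n))) :
    ∀ M : FGFree B, Subsingleton (F.obj M) :=
  polynomial_functor_vanishing_general B n F hF h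
end

section
/- Let B be a binomial ring, M a B-module, and n a natural number. The divided power map γ_n : x ↦ x^{[n]} is numerical of degree n; that is: (1) for all x_1,…,x_{n+1} ∈ M, ∑_{I ⊆ {1,…,n+1}} (−1)^{n+1−|I|} (∑_{i∈I} x_i)^{[n]} = 0 in the divided power algebra; and (2) for all r ∈ B and x ∈ M, (r·x)^{[n]} = ∑_{k=0}^{n} binom(r,k) · (∑_{j=0}^{k} (−1)^{k−j} binom(k,j) (j·x)^{[n]}). -/
open Finset MvPolynomial

universe u

variable (B : Type u) [CommRing B] (M : Type u) [AddCommGroup M] [Module B M]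

/-- The relations defining the divided power algebra of a module. -/
inductive DividedPowerAlgebra'.Rel :
    MvPolynomial (ℕ × M) B → MvPolynomial (ℕ × M) B → Prop
  | zero {m : M} : Rel (X (0, m)) 1
  | smul {r : B} {n : ℕ} {m : M} : Rel (X (n, r • m)) (C (r ^ n) * X (n, m))
  | mul {n p : ℕ} {m : M} :
      Rel (X (n, m) * X (p, m)) (C ((n + p).choose n : B) * X (n + p, m))
  | add {n : ℕ} {m m' : M} :
      Rel (X (n, m + m')) (∑ ij ∈ Finset.HasAntidiagonal.antidiagonal n, X (ij.1, m) * X (ij.2, m'))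

/-- The divided power algebra `Γ(M)` of a `B`-module `M`. -/
def DividedPowerAlgebra' : Type u := RingQuot (DividedPowerAlgebra'.Rel B M)

namespace DividedPowerAlgebra'

noncomputable instance : CommRing (DividedPowerAlgebra' B M) :=
  inferInstanceAs (CommRing (RingQuot (Rel B M)))

noncomputable instance : Algebra B (DividedPowerAlgebra' B M) :=
  inferInstanceAs (Algebra B (RingQuot (Rel B M)))

/-- The divided power `x^{[n]} = dp n x` in the divided power algebra. -/
noncomputable def dp (n : ℕ) (x : M) : DividedPowerAlgebra' B M :=
  RingQuot.mkAlgHom B (Rel B M) (X (n, x))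

/-- The degree-`n` graded component `Γ^n(M)` of the divided power algebra. -/
noncomputable def grade (n : ℕ) : Submodule B (DividedPowerAlgebra' B M) :=
  Submodule.span B
    {u | ∃ (k : ℕ) (d : Fin k → ℕ) (x : Fin k → M), (∑ i, d i) = n ∧ u = ∏ i, dp B M (d i) (x i)}

theorem dp_mem_grade (n : ℕ) (x : M) : dp B M n x ∈ grade B M n :=
  Submodule.subset_span ⟨1, fun _ => n, fun _ => x, by simp, by simp⟩

end DividedPowerAlgebra'

/-! The multinomial formula writes `(∑_{i ∈ I} x_i)^{[n]}` as a sum over multisets `c` of size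
`n` on `{1, …, n+1}` of `∏_{i ∈ I} x_i^{[c_i]} ∏_{i ∉ I} 0^{[c_i]}`, so the signed sum over `I`
factors as `∑_c ∏_i (x_i^{[c_i]} - 0^{[c_i]})`. As `c` has `n` elements and there are `n + 1`
indices, some `c_i` vanishes, and then `x_i^{[0]} - 0^{[0]} = 1 - 1 = 0`.

Since `(r x)^{[n]} = r^n x^{[n]}`, the second law is the Newton expansion
`r^n = ∑_k binom(r, k) Δ^k(s ↦ s^n)(0)` in a binomial ring. Both sides equal
`∑_k S(n,k) k! binom(r,k)` with `S` the Stirling numbers of the second kind: the left one by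
`r · k! binom(r,k) = (k+1)! binom(r,k+1) + k · k! binom(r,k)`, the right one because
`Δ^k binom(·, m)(0) = δ_{km}`. -/

section NewtonSeries

open Nat Function Polynomial fwdDiff

theorem mul_descPochhammer_smeval {R : Type*} [CommRing R] (r : R) (k : ℕ) :
    r * (descPochhammer ℤ k).smeval r =
      (descPochhammer ℤ (k + 1)).smeval r + k • (descPochhammer ℤ k).smeval r := by
  rw [descPochhammer_succ_right, smeval_mul, smeval_sub, smeval_X, smeval_natCast]
  simp only [pow_one, pow_zero, nsmul_eq_mul, mul_one]
  ring

theorem pow_eq_sum_stirlingSecond_smul_descPochhammer {R : Type*} [CommRing R] (r : R) (n : ℕ) :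
    r ^ n = ∑ k ∈ range (n + 1), stirlingSecond n k • (descPochhammer ℤ k).smeval r := by
  induction n with
  | zero => simp
  | succ n ih =>
    set P := fun k => (descPochhammer ℤ k).smeval r
    calc r ^ (n + 1) = ∑ k ∈ range (n + 1), stirlingSecond n k • (r * P k) := by
          rw [_root_.pow_succ', ih, mul_sum]; simp only [mul_smul_comm, P]
      _ = ∑ k ∈ range (n + 1), stirlingSecond n k • P (k + 1) +
            ∑ k ∈ range (n + 2), (k * stirlingSecond n k) • P k := by
          rw [sum_range_succ _ (n + 1), stirlingSecond_eq_zero_of_lt (lt_add_one n), mul_zero,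
            zero_smul, add_zero, ← sum_add_distrib]
          refine sum_congr rfl fun k _ => ?_
          rw [mul_descPochhammer_smeval, smul_add, mul_comm, mul_smul]
      _ = ∑ k ∈ range (n + 2), stirlingSecond (n + 1) k • P k := by
          rw [sum_range_succ' _ (n + 1), sum_range_succ' _ (n + 1)]
          simp only [stirlingSecond_succ_succ, stirlingSecond_succ_zero, zero_mul, zero_smul,
            add_zero, add_smul, sum_add_distrib]
          rw [add_comm]

theorem pow_eq_sum_stirlingSecond_mul_factorial_smul_choose {R : Type*} [CommRing R]
    [BinomialRing R] (r : R) (n : ℕ) :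
    r ^ n = ∑ k ∈ range (n + 1), (stirlingSecond n k * k !) • Ring.choose r k := by
  simp only [pow_eq_sum_stirlingSecond_smul_descPochhammer r n,
    Ring.descPochhammer_eq_factorial_smul_choose, mul_smul]

theorem fwdDiff_iter_natCast_pow_zero (n k : ℕ) :
    (Δ_[1])^[k] (fun j : ℕ ↦ (j : ℤ) ^ n) 0 = stirlingSecond n k * k ! := by
  have hpow : (fun j : ℕ ↦ (j : ℤ) ^ n) =
      ∑ m ∈ range (n + 1), (stirlingSecond n m * m !) • fun j : ℕ ↦ (j.choose m : ℤ) := by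
    ext j
    simp [pow_eq_sum_stirlingSecond_mul_factorial_smul_choose (j : ℤ) n, Ring.choose_natCast]
  rw [hpow, fwdDiff_iter_finsetSum]
  simp only [Finset.sum_apply, fwdDiff_iter_const_smul, Pi.smul_apply, fwdDiff_iter_choose_zero,
    smul_ite, smul_zero, sum_ite_eq, mem_range]
  split_ifs with hk
  · simp
  · simp [stirlingSecond_eq_zero_of_lt (by omega : n < k)]

theorem fwdDiff_iter_pow_zero {R : Type*} [CommRing R] (n k : ℕ) :
    (Δ_[1])^[k] (fun s : R ↦ s ^ n) 0 = (stirlingSecond n k * k ! : ℕ) := by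
  have := congrArg (Int.cast : ℤ → R) (fwdDiff_iter_natCast_pow_zero n k)
  simp only [fwdDiff_iter_eq_sum_shift] at this ⊢
  push_cast at this ⊢
  simpa using this

theorem pow_eq_sum_choose_mul_fwdDiff_iter_pow {R : Type*} [CommRing R] [BinomialRing R]
    (r : R) (n : ℕ) :
    r ^ n = ∑ k ∈ range (n + 1), Ring.choose r k * (Δ_[1])^[k] (fun s : R ↦ s ^ n) 0 := by
  simp only [pow_eq_sum_stirlingSecond_mul_factorial_smul_choose r n, fwdDiff_iter_pow_zero,
    nsmul_eq_mul, mul_comm]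

end NewtonSeries

namespace DividedPowerAlgebra'

variable {B M}

theorem dp_zero (m : M) : dp B M 0 m = 1 := by
  rw [dp, RingQuot.mkAlgHom_rel B Rel.zero, map_one]
  rfl

theorem dp_smul (r : B) (k : ℕ) (m : M) : dp B M k (r • m) = r ^ k • dp B M k m := by
  rw [dp, RingQuot.mkAlgHom_rel B Rel.smul, map_mul, ← dp, Algebra.smul_def,
    ← MvPolynomial.algebraMap_eq, AlgHom.commutes]
  rfl

theorem dp_add (k : ℕ) (m m' : M) :
    dp B M k (m + m') = ∑ ij ∈ antidiagonal k, dp B M ij.1 m * dp B M ij.2 m' := by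
  simp only [dp, RingQuot.mkAlgHom_rel B Rel.add, map_sum, map_mul]
  rfl

theorem dp_zero_right {k : ℕ} (hk : k ≠ 0) : dp B M k 0 = 0 := by
  simpa [zero_pow hk] using dp_smul (0 : B) k (0 : M)

theorem dp_sum {ι : Type*} [DecidableEq ι] (s : Finset ι) (k : ℕ) (x : ι → M) :
    dp B M k (∑ i ∈ s, x i) = ∑ c ∈ s.sym k, ∏ i ∈ s, dp B M (Multiset.count i c) (x i) :=
  DividedPowers.dpow_sum' (I := ⊤) _ (fun _ ↦ dp_zero _) (fun _ _ ↦ dp_add _ _ _)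
    dp_zero_right (fun _ _ ↦ trivial)

section Deviation

variable {ι : Type*} [Fintype ι] [DecidableEq ι]

theorem dp_sum_eq_sum_sym_univ (k : ℕ) (x : ι → M) (I : Finset ι) :
    dp B M k (∑ i ∈ I, x i) = ∑ c ∈ (univ : Finset ι).sym k,
      (∏ i ∈ I, dp B M (Multiset.count i c) (x i)) *
        ∏ i ∈ univ \ I, dp B M (Multiset.count i c) 0 := by
  have hx : ∑ i ∈ I, x i = ∑ i, I.piecewise x 0 i := by
    rw [sum_piecewise, univ_inter, Pi.zero_def, sum_const_zero, add_zero]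
  rw [hx, dp_sum]
  refine sum_congr rfl fun c _ => ?_
  have hsplit := prod_piecewise univ I
    (fun i => dp B M (Multiset.count i c) (x i)) fun i => dp B M (Multiset.count i c) 0
  rw [univ_inter] at hsplit
  rw [← hsplit]
  refine prod_congr rfl fun i _ => ?_
  by_cases hi : i ∈ I <;> simp [hi]

theorem sum_neg_one_pow_smul_dp_sum (k : ℕ) (x : ι → M) :
    ∑ I : Finset ι, (-1 : ℤ) ^ (Fintype.card ι - #I) • dp B M k (∑ i ∈ I, x i) =
      ∑ c ∈ (univ : Finset ι).sym k,
        ∏ i, (dp B M (Multiset.count i c) (x i) - dp B M (Multiset.count i c) 0) := by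
  simp only [dp_sum_eq_sum_sym_univ, smul_sum]
  rw [sum_comm]
  refine sum_congr rfl fun c _ => ?_
  simp only [sub_eq_add_neg]
  rw [prod_add, powerset_univ]
  refine sum_congr rfl fun I _ => ?_
  rw [prod_neg, card_univ_sdiff, zsmul_eq_mul, mul_left_comm]
  push_cast
  ring

theorem sum_neg_one_pow_smul_dp_sum_eq_zero {k : ℕ} (hk : k < Fintype.card ι) (x : ι → M) :
    ∑ I : Finset ι, (-1 : ℤ) ^ (Fintype.card ι - #I) • dp B M k (∑ i ∈ I, x i) = 0 := by
  rw [sum_neg_one_pow_smul_dp_sum]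
  refine sum_eq_zero fun c _ => ?_
  obtain ⟨i, -, hi⟩ : ∃ i ∈ univ, i ∉ (c : Multiset ι).toFinset :=
    exists_mem_notMem_of_card_lt_card <|
      ((c : Multiset ι).toFinset_card_le.trans_eq c.card_coe).trans_lt hk
  refine prod_eq_zero (mem_univ i) ?_
  rw [Multiset.count_eq_zero.mpr (by simpa using hi), dp_zero, dp_zero, sub_self]

end Deviation

end DividedPowerAlgebra'

open DividedPowerAlgebra' in
/-- The divided power map `γ_n : x ↦ x^{[n]}` is numerical of degree `n`:
its `n`-th deviation vanishes, and it satisfies the binomial expansion law. -/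
theorem dp_isNumerical (B : Type u) [CommRing B] [BinomialRing B]
    (M : Type u) [AddCommGroup M] [Module B M] (n : ℕ) :
    (∀ x : Fin (n + 1) → M,
        (∑ I : Finset (Fin (n + 1)), (-1 : ℤ) ^ (n + 1 - I.card) • dp B M n (∑ i ∈ I, x i)) = 0) ∧
      (∀ (r : B) (x : M),
        dp B M n (r • x) =
          ∑ k ∈ Finset.range (n + 1),
            Ring.choose r k •
              ∑ j ∈ Finset.range (k + 1),
                ((-1 : ℤ) ^ (k - j) * (k.choose j : ℤ)) • dp B M n ((j : B) • x)) := by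
  refine ⟨fun x => ?_, fun r x => ?_⟩
  · simpa only [Fintype.card_fin] using
      sum_neg_one_pow_smul_dp_sum_eq_zero (B := B) (by simp) x
  · simp only [dp_smul]
    rw [pow_eq_sum_choose_mul_fwdDiff_iter_pow r n, sum_smul]
    refine sum_congr rfl fun k _ => ?_
    rw [mul_smul, fwdDiff_iter_eq_sum_shift, sum_smul]
    congr 1
    refine sum_congr rfl fun j _ => ?_
    rw [zero_add, nsmul_one, smul_assoc]
end

section
/- Let B be a binomial ring, A an associative unital B-algebra, and n ≥ 1. In the free B-module B[A] on basis symbols [a], a ∈ A, equipped with the product multiplication [a] ⋆ [b] := [ab] (the monoid algebra of the multiplicative monoid of A), one has [Δ_n α] ⋆ [Δ_n β] ≡ n! · [Δ_n (αβ)] modulo I_n, for all α, β ∈ A; here [Δ_n α] := ∑_{j=0}^{n} (−1)^{n−j} binom(n,j) [j·α]. -/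
/-!
For the sum multiplication `[j • x] = [x] ^ j`, hence `[Δ_n x] = ([x] - 1) ^ n`, and the star
product `[Δ_n α] ⋆ [Δ_n β]` is `∑_j c_j ([αβ] ^ j - 1) ^ n` with `c_j = (-1) ^ (n - j) binom(n, j)`.
Put `δ = [αβ] - 1`. Then `[αβ] ^ j - 1 = δ (1 + [αβ] + ⋯ + [αβ] ^ (j - 1))` and the second factor
is `j` modulo `δ`, so `([αβ] ^ j - 1) ^ n ≡ j ^ n δ ^ n` modulo `δ ^ (n + 1) = [αβ ⊥ ⋯ ⊥ αβ] ∈ I_n`.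
Finally `∑_j c_j j ^ n = n!` is the `n`-th forward difference of `x ^ n`.
-/

set_option linter.unusedSectionVars false

open Finset

universe u

variable (B : Type u) [CommRing B] [BinomialRing B]
variable (M : Type u) [AddCommGroup M] [Module B M]

/-- The basis symbol `[x]` in the monoid algebra `B[M]` of the additive monoid `M`. -/
noncomputable def brk (x : M) : AddMonoidAlgebra B M := AddMonoidAlgebra.single x 1

/-- The ideal `I_n ⊆ B[M]` (for the sum multiplication `[x][y] = [x+y]`), generated by the
`(n+1)`-fold deviations `[x_1 ⊥ ⋯ ⊥ x_{n+1}] = ∏ ([x_i] − [0])` and the elements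
`[r·x] − ∑_{k=0}^n binom(r,k) ([x] − [0])^k`. -/
noncomputable def augIdeal (n : ℕ) : Ideal (AddMonoidAlgebra B M) :=
  Ideal.span
    ({ω | ∃ x : Fin (n + 1) → M, ω = ∏ i, (brk B M (x i) - brk B M 0)} ∪
      {ω | ∃ (r : B) (x : M), ω =
        brk B M (r • x) -
          ∑ k ∈ Finset.range (n + 1), Ring.choose r k • (brk B M x - brk B M 0) ^ k})

/-- The `n`-th augmentation algebra `B[M]_n = B[M]/I_n`, as a `B`-module. -/
noncomputable def augAlgebra (n : ℕ) : Type u :=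
  AddMonoidAlgebra B M ⧸ (augIdeal B M n).restrictScalars B

noncomputable instance (n : ℕ) : AddCommGroup (augAlgebra B M n) :=
  inferInstanceAs (AddCommGroup (AddMonoidAlgebra B M ⧸ (augIdeal B M n).restrictScalars B))

noncomputable instance (n : ℕ) : Module B (augAlgebra B M n) :=
  inferInstanceAs (Module B (AddMonoidAlgebra B M ⧸ (augIdeal B M n).restrictScalars B))

/-- The quotient map `B[M] → B[M]_n`. -/
noncomputable def augMk (n : ℕ) : AddMonoidAlgebra B M →ₗ[B] augAlgebra B M n :=
  ((augIdeal B M n).restrictScalars B).mkQ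

variable (A : Type u) [Ring A] [Algebra B A]

/-- The product multiplication `[a] ⋆ [b] = [ab]` on `B[A]`, for a `B`-algebra `A`. -/
noncomputable def starMul (ω ν : AddMonoidAlgebra B A) : AddMonoidAlgebra B A :=
  AddMonoidAlgebra.ofCoeff
    (Finsupp.sum ω.coeff fun x a => Finsupp.sum ν.coeff fun y b => Finsupp.single (x * y) (a * b))


open scoped Nat

section Combinatorics

variable {R : Type*} [CommRing R]

theorem sum_alternating_choose_smul_pow (y : R) (n : ℕ) :
    ∑ j ∈ range (n + 1), ((-1 : ℤ) ^ (n - j) * n.choose j) • y ^ j = (y - 1) ^ n := by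
  rw [sub_eq_add_neg, add_pow]
  refine sum_congr rfl fun j _ => ?_
  rw [zsmul_eq_mul]
  push_cast
  ring

theorem sum_alternating_choose_mul_pow_self (n : ℕ) :
    ∑ j ∈ range (n + 1), ((-1 : ℤ) ^ (n - j) * n.choose j) * (j : ℤ) ^ n = n ! := by
  simpa [fwdDiff_iter_eq_sum_shift] using
    congr_fun (fwdDiff_iter_eq_factorial (R := ℤ) (n := n)) 0

theorem sub_one_pow_succ_dvd_pow_sub_one_pow_sub (y : R) (j n : ℕ) :
    (y - 1) ^ (n + 1) ∣ (y ^ j - 1) ^ n - ((j : R) * (y - 1)) ^ n := by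
  set u := ∑ i ∈ range j, y ^ i
  have hu_sub : y - 1 ∣ u - j := by
    rw [show u - j = ∑ i ∈ range j, (y ^ i - 1 ^ i) by simp [u]]
    exact dvd_sum fun i _ => sub_dvd_pow_sub_pow y 1 i
  rw [← geom_sum_mul, mul_pow, mul_pow, ← sub_mul, pow_succ, mul_comm _ (y - 1)]
  exact mul_dvd_mul_right (hu_sub.trans (sub_dvd_pow_sub_pow u j n)) _

theorem sub_one_pow_succ_dvd_sum_alternating_choose_smul_sub_factorial_smul (y : R) (n : ℕ) :
    (y - 1) ^ (n + 1) ∣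
      ∑ j ∈ range (n + 1), ((-1 : ℤ) ^ (n - j) * n.choose j) • (y ^ j - 1) ^ n
        - n ! • (y - 1) ^ n := by
  have h : n ! • (y - 1) ^ n =
      ∑ j ∈ range (n + 1), ((-1 : ℤ) ^ (n - j) * n.choose j) • ((j : R) * (y - 1)) ^ n := by
    simp_rw [mul_pow, ← Int.cast_natCast (R := R), ← Int.cast_pow, ← zsmul_eq_mul, smul_smul,
      ← sum_smul, sum_alternating_choose_mul_pow_self, natCast_zsmul]
  rw [h, ← sum_sub_distrib]
  exact dvd_sum fun j _ => by
    rw [← smul_sub]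
    exact dvd_smul_of_dvd _ (sub_one_pow_succ_dvd_pow_sub_one_pow_sub y j n)

end Combinatorics

section Brackets

variable {R X : Type u} [CommRing R]

theorem brk_zero [Zero X] : brk R X 0 = 1 := rfl

theorem brk_nsmul [AddMonoid X] (x : X) (j : ℕ) : brk R X (j • x) = brk R X x ^ j := by
  rw [brk, brk, AddMonoidAlgebra.single_pow, one_pow]

theorem sum_alternating_choose_smul_brk_nsmul [AddCommMonoid X] (x : X) (n : ℕ) :
    ∑ j ∈ range (n + 1), ((-1 : ℤ) ^ (n - j) * n.choose j) • brk R X (j • x) =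
      (brk R X x - 1) ^ n := by
  simp_rw [brk_nsmul]
  exact sum_alternating_choose_smul_pow (brk R X x) n

end Brackets

theorem brk_sub_one_pow_succ_mem_augIdeal {B M : Type u} [CommRing B] [BinomialRing B]
    [AddCommGroup M] [Module B M] (x : M) (n : ℕ) :
    (brk B M x - 1) ^ (n + 1) ∈ augIdeal B M n := by
  refine Ideal.subset_span (Or.inl ⟨fun _ => x, ?_⟩)
  simp [brk_zero]

noncomputable def AddMonoidAlgebra.equivMonoidAlgebra {R S : Type*} [Semiring R] :
    AddMonoidAlgebra R S ≃+ MonoidAlgebra R S :=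
  AddMonoidAlgebra.coeffAddEquiv.trans MonoidAlgebra.coeffAddEquiv.symm

section StarMul

open AddMonoidAlgebra (equivMonoidAlgebra)

variable {R S : Type u} [CommRing R] [Ring S]

theorem starMul_eq_mul (ω ν : AddMonoidAlgebra R S) :
    starMul R S ω ν =
      equivMonoidAlgebra.symm (equivMonoidAlgebra ω * equivMonoidAlgebra ν) := by
  rw [AddEquiv.eq_symm_apply, starMul, MonoidAlgebra.mul_def]
  simp_rw [← MonoidAlgebra.ofCoeff_single, ← MonoidAlgebra.ofCoeff_finsuppSum]
  rfl

theorem equivMonoidAlgebra_brk (x : S) :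
    equivMonoidAlgebra (brk R S x) = MonoidAlgebra.single x 1 := rfl

theorem starMul_sum_smul_brk {ι κ : Type*} (s : Finset ι) (t : Finset κ)
    (a : ι → ℤ) (b : κ → ℤ) (x : ι → S) (y : κ → S) :
    starMul R S (∑ i ∈ s, a i • brk R S (x i)) (∑ j ∈ t, b j • brk R S (y j)) =
      ∑ i ∈ s, ∑ j ∈ t, (a i * b j) • brk R S (x i * y j) := by
  simp_rw [starMul_eq_mul, map_sum, map_zsmul, equivMonoidAlgebra_brk, sum_mul_sum,
    smul_mul_smul_comm, MonoidAlgebra.single_mul_single, one_mul, map_sum, map_zsmul]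
  rfl

end StarMul

theorem starMul_delta_congr_general (B : Type u) [CommRing B] [BinomialRing B]
    (A : Type u) [Ring A] [Algebra B A] (n : ℕ) (α β : A) :
    starMul B A
        (∑ j ∈ Finset.range (n + 1), ((-1 : ℤ) ^ (n - j) * (n.choose j : ℤ)) • brk B A (j • α))
        (∑ j ∈ Finset.range (n + 1), ((-1 : ℤ) ^ (n - j) * (n.choose j : ℤ)) • brk B A (j • β))
        - n.factorial •
          (∑ j ∈ Finset.range (n + 1),
            ((-1 : ℤ) ^ (n - j) * (n.choose j : ℤ)) • brk B A (j • (α * β)))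
      ∈ augIdeal B A n := by
  set c : ℕ → ℤ := fun j => (-1) ^ (n - j) * n.choose j
  have hstar : starMul B A (∑ j ∈ range (n + 1), c j • brk B A (j • α))
      (∑ l ∈ range (n + 1), c l • brk B A (l • β)) =
      ∑ j ∈ range (n + 1), c j • (brk B A (α * β) ^ j - 1) ^ n := by
    rw [starMul_sum_smul_brk]
    refine sum_congr rfl fun j _ => ?_
    have hmul : ∀ l : ℕ, j • α * l • β = l • j • (α * β) := fun l => by
      rw [smul_mul_smul_comm, mul_comm, mul_smul]
    simp_rw [hmul, mul_smul]
    rw [← smul_sum, sum_alternating_choose_smul_brk_nsmul, brk_nsmul]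
  rw [hstar, sum_alternating_choose_smul_brk_nsmul]
  exact Ideal.mem_of_dvd _ (sub_one_pow_succ_dvd_sum_alternating_choose_smul_sub_factorial_smul _ n)
    (brk_sub_one_pow_succ_mem_augIdeal _ n)

/-- The deviation formula: `[Δ_n α] ⋆ [Δ_n β] ≡ n! · [Δ_n (αβ)]` modulo `I_n`,
where `[Δ_n α] = ∑_{j=0}^n (−1)^{n−j} C(n,j) [j·α]`. -/
theorem starMul_delta_congr (B : Type u) [CommRing B] [BinomialRing B]
    (A : Type u) [Ring A] [Algebra B A] (n : ℕ) (hn : 1 ≤ n) (α β : A) :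
    starMul B A
        (∑ j ∈ Finset.range (n + 1), ((-1 : ℤ) ^ (n - j) * (n.choose j : ℤ)) • brk B A (j • α))
        (∑ j ∈ Finset.range (n + 1), ((-1 : ℤ) ^ (n - j) * (n.choose j : ℤ)) • brk B A (j • β))
        - n.factorial •
          (∑ j ∈ Finset.range (n + 1),
            ((-1 : ℤ) ^ (n - j) * (n.choose j : ℤ)) • brk B A (j • (α * β)))
      ∈ augIdeal B A n :=
  starMul_delta_congr_general B A n α β
end

section
/- Let B be a binomial ring, F a polynomial functor of degree n from finitely generated free B-modules to B-modules, and r ∈ B. If F(r·σ) = r^n · F(σ) for every endomorphism σ : B^n → B^n, then F(r·α) = r^n · F(α) for every homomorphism α : M → N of finitely generated free B-modules. -/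
/-!
Write `D(φ) = F(r•φ) - rⁿ•F(φ)`. Since `φ ↦ F(r•φ)` is polynomial of degree `n` along with `F`,
every `n`-th deviation of `D` vanishes, so `D` vanishes on a sum of `n + 1` maps as soon as it
vanishes on all its proper partial sums. Decompose `α : M → N` along a basis of `M` into maps of
rank one; a sum of at most `n` of them factors through `Bⁿ`, where `D = 0` by hypothesis, and
induction on the number of summands gives `D(α) = 0`.
-/

open Finset

universe u

variable (B : Type u) [CommRing B] [BinomialRing B]

section Deviation

variable {A V : Type*} [AddCommMonoid A] [AddCommGroup V]

def deviation {k : ℕ} (D : A → V) (β : Fin k → A) : V :=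
  ∑ I : Finset (Fin k), (-1 : ℤ) ^ (k - #I) • D (∑ i ∈ I, β i)

lemma deviation_sub_smul {R : Type*} [Semiring R] [Module R V] {k : ℕ} (D E : A → V) (c : R)
    (β : Fin k → A) :
    deviation (fun a ↦ D a - c • E a) β = deviation D β - c • deviation E β := by
  simp only [deviation, smul_sub, sum_sub_distrib, smul_sum, smul_comm c]

lemma deviation_comp_smul {R : Type*} [Semiring R] [Module R A] {k : ℕ} (D : A → V) (c : R)
    (β : Fin k → A) :
    deviation (fun a ↦ D (c • a)) β = deviation D (c • β) := by
  simp only [deviation, smul_sum, Pi.smul_apply]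

lemma apply_sum_eq_zero_of_deviation_eq_zero {k : ℕ} {D : A → V} {β : Fin k → A}
    (hβ : deviation D β = 0) (hproper : ∀ J ≠ univ, D (∑ j ∈ J, β j) = 0) :
    D (∑ j, β j) = 0 := by
  rw [deviation, sum_eq_single_of_mem univ (mem_univ _)
    (fun J _ hJ ↦ by rw [hproper J hJ, smul_zero])] at hβ
  simpa using hβ

theorem apply_sum_eq_zero_of_forall_card_le {n : ℕ} {D : A → V}
    (hD : ∀ β : Fin (n + 1) → A, deviation D β = 0) {ι : Type*} (γ : ι → A)
    (hsmall : ∀ s : Finset ι, #s ≤ n → D (∑ i ∈ s, γ i) = 0) (s : Finset ι) :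
    D (∑ i ∈ s, γ i) = 0 := by
  classical
  induction s using Finset.strongInduction with
  | H s ih =>
  by_cases hs : #s ≤ n
  · exact hsmall s hs
  obtain ⟨e⟩ : Nonempty (Fin (n + 1) ↪ s) :=
    Function.Embedding.nonempty_of_card_le (by simp only [Fintype.card_fin, Fintype.card_coe]; omega)
  let u : Fin (n + 1) → ι := fun j ↦ e j
  have hu : Function.Injective u := Subtype.val_injective.comp e.injective
  -- Every fibre of `c` meets `s`, so each proper partial sum of the fibre sums omits part of `s`.
  let c : ι → Fin (n + 1) := Function.invFun u
  have hc (J : Finset (Fin (n + 1))) :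
      ∑ j ∈ J, ∑ i ∈ s with c i = j, γ i = ∑ i ∈ s with c i ∈ J, γ i :=
    sum_fiberwise_eq_sum_filter s J c γ
  have key := apply_sum_eq_zero_of_deviation_eq_zero (hD fun j ↦ ∑ i ∈ s with c i = j, γ i)
    fun J hJ ↦ by
      obtain ⟨j, hj⟩ := not_forall.mp (mt eq_univ_iff_forall.mpr hJ)
      rw [hc]
      refine ih _ (filter_ssubset.mpr ⟨u j, (e j).2, ?_⟩)
      rwa [show c (u j) = j from Function.leftInverse_invFun hu j]
  simpa only [hc, mem_univ, filter_true_of_mem, implies_true] using key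

end Deviation

lemma Module.Basis.exists_sum_smulRight_eq_comp {R M ι : Type*} [Semiring R] [AddCommMonoid M]
    [Module R M] (b : Basis ι R M) {s : Finset ι} {n : ℕ} (hs : #s ≤ n) :
    ∃ (f : M →ₗ[R] Fin n → R) (g : (Fin n → R) →ₗ[R] M),
      ∑ i ∈ s, (b.coord i).smulRight (b i) = g ∘ₗ f := by
  obtain ⟨u⟩ : Nonempty (s ↪ Fin n) :=
    Function.Embedding.nonempty_of_card_le (by simpa using hs)
  refine ⟨Function.ExtendByZero.linearMap R u ∘ₗ LinearMap.pi fun i : s ↦ b.coord i,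
    Fintype.linearCombination R (fun i : s ↦ b i) ∘ₗ LinearMap.funLeft R R u, ?_⟩
  ext x
  simp [Fintype.linearCombination_apply, u.injective.extend_apply, ← sum_coe_sort s]

namespace ModFunctor

lemma map_smul_comp_std {B : Type u} [CommRing B] (F : ModFunctor B) {n : ℕ} {r : B}
    (h : ∀ σ : FGFree.std B n →ₗ[B] FGFree.std B n, F.map (r • σ) = r ^ n • F.map σ)
    {M N : FGFree B} (f : M →ₗ[B] FGFree.std B n) (g : FGFree.std B n →ₗ[B] N) :
    F.map (r • (g ∘ₗ f)) = r ^ n • F.map (g ∘ₗ f) := by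
  have : r • (g ∘ₗ f) = g ∘ₗ (r • LinearMap.id) ∘ₗ f := by
    ext; simp
  rw [this, F.map_comp, F.map_comp, h, F.map_id, F.map_comp]
  ext; simp

lemma IsPolynomial.deviation_map_smul_sub {B : Type u} [CommRing B] {F : ModFunctor B} {n : ℕ}
    (hF : F.IsPolynomial B n) (r c : B)
    {M N : FGFree B} (β : Fin (n + 1) → (M →ₗ[B] N)) :
    deviation (fun φ ↦ F.map (r • φ) - c • F.map φ) β = 0 := by
  rw [deviation_sub_smul, deviation_comp_smul (fun φ ↦ F.map φ)]
  change F.dev B (r • β) - c • F.dev B β = 0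
  rw [hF, hF, smul_zero, sub_zero]

end ModFunctor

theorem quasiHomogeneous_of_std_general (B : Type u) [CommRing B]
    (n : ℕ) (F : ModFunctor B) (hF : F.IsPolynomial B n) (r : B)
    (h : ∀ σ : FGFree.std B n →ₗ[B] FGFree.std B n, F.map (r • σ) = r ^ n • F.map σ) :
    ∀ (M N : FGFree B) (α : M →ₗ[B] N), F.map (r • α) = r ^ n • F.map α := by
  intro M N α
  let b := Module.Free.chooseBasis B M
  let γ i : M →ₗ[B] N := α ∘ₗ (b.coord i).smulRight (b i)
  have hγ (s) : ∑ i ∈ s, γ i = α ∘ₗ ∑ i ∈ s, (b.coord i).smulRight (b i) := by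
    ext; simp [γ]
  have hα : ∑ i, γ i = α := by
    ext x; simp [hγ, b.sum_repr]
  rw [← sub_eq_zero, ← hα]
  refine apply_sum_eq_zero_of_forall_card_le (hF.deviation_map_smul_sub r (r ^ n)) γ
    (fun s hs ↦ ?_) univ
  obtain ⟨f, g, hfg⟩ := b.exists_sum_smulRight_eq_comp hs
  rw [sub_eq_zero, hγ, hfg, ← LinearMap.comp_assoc]
  exact F.map_smul_comp_std h f (α ∘ₗ g)

/-- If a polynomial functor of degree `n` satisfies `F(r·σ) = r^n·F(σ)` on endomorphisms of
`B^n`, then it does so on all homomorphisms of f.g. free modules. -/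
theorem quasiHomogeneous_of_std (B : Type u) [CommRing B] [BinomialRing B]
    (n : ℕ) (F : ModFunctor B) (hF : F.IsPolynomial B n) (r : B)
    (h : ∀ σ : FGFree.std B n →ₗ[B] FGFree.std B n, F.map (r • σ) = r ^ n • F.map σ) :
    ∀ (M N : FGFree B) (α : M →ₗ[B] N), F.map (r • α) = r ^ n • F.map α :=
  quasiHomogeneous_of_std_general B n F hF r h
end

section
/- Let B be a binomial ring and M a finitely generated free B-module. The degree-2 graded component Γ^2(M) of the divided power algebra of M is spanned as a B-module by the divided squares {x^{[2]} : x ∈ M}; consequently, the B-linear map γ̃_2 : B[M] → Γ^2(M) determined by [x] ↦ x^{[2]} is surjective, and hence so is the divided power map γ_2 : B[M]_2 → Γ^2(M). -/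
set_option linter.unusedSectionVars false
open Finset MvPolynomial TensorProduct

universe u

variable (B : Type u) [CommRing B] [BinomialRing B]
variable (M : Type u) [AddCommGroup M] [Module B M]

/-- The relations defining the divided power algebra of a module. -/
inductive DividedPowerAlg.Rel :
    MvPolynomial (ℕ × M) B → MvPolynomial (ℕ × M) B → Prop
  | zero {m : M} : Rel (X (0, m)) 1
  | smul {r : B} {n : ℕ} {m : M} : Rel (X (n, r • m)) (C (r ^ n) * X (n, m))
  | mul {n p : ℕ} {m : M} :
      Rel (X (n, m) * X (p, m)) (C ((n + p).choose n : B) * X (n + p, m))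
  | add {n : ℕ} {m m' : M} :
      Rel (X (n, m + m')) (∑ ij ∈ Finset.HasAntidiagonal.antidiagonal n, X (ij.1, m) * X (ij.2, m'))

/-- The divided power algebra `Γ(M)` of a `B`-module `M`. -/
def DividedPowerAlg : Type u := RingQuot (DividedPowerAlg.Rel B M)

namespace DividedPowerAlg

noncomputable instance : CommRing (DividedPowerAlg B M) :=
  inferInstanceAs (CommRing (RingQuot (Rel B M)))

noncomputable instance : Algebra B (DividedPowerAlg B M) :=
  inferInstanceAs (Algebra B (RingQuot (Rel B M)))

/-- The divided power `x^{[n]} = dp n x` in the divided power algebra. -/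
noncomputable def dp (n : ℕ) (x : M) : DividedPowerAlg B M :=
  RingQuot.mkAlgHom B (Rel B M) (X (n, x))

/-- The degree-`n` graded component `Γ^n(M)` of the divided power algebra. -/
noncomputable def grade (n : ℕ) : Submodule B (DividedPowerAlg B M) :=
  Submodule.span B
    {u | ∃ (k : ℕ) (d : Fin k → ℕ) (x : Fin k → M),
      (∑ i, d i) = n ∧ u = ∏ i, dp B M (d i) (x i)}

theorem dp_mem_grade (n : ℕ) (x : M) : dp B M n x ∈ grade B M n :=
  Submodule.subset_span ⟨1, fun _ => n, fun _ => x, by simp, by simp⟩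

end DividedPowerAlg

/-- The `B`-linear map `γ̃_n : B[M] → Γ^n(M)`, determined by `[x] ↦ x^{[n]}`. -/
noncomputable def gammaTilde (n : ℕ) :
    AddMonoidAlgebra B M →ₗ[B] ↥(DividedPowerAlg.grade B M n) :=
  Finsupp.lift ↥(DividedPowerAlg.grade B M n) B M
    (fun x => ⟨DividedPowerAlg.dp B M n x, DividedPowerAlg.dp_mem_grade B M n x⟩) ∘ₗ
    (AddMonoidAlgebra.coeffLinearEquiv B).toLinearMap

/-!
A product of divided powers of total degree 2 is, up to factors `x^{[0]} = 1`, either a divided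
square `x^{[2]}` or a product `x^{[1]} y^{[1]}`, and the latter equals
`(x + y)^{[2]} - x^{[2]} - y^{[2]}` by the addition rule for `(x + y)^{[2]}`. Hence the divided
squares span `Γ^2(M)`, and they lie in the image of `γ̃_2`, which is also the image of `γ_2`.
-/

namespace DividedPowerAlg

variable {B M}

lemma dp_zero (x : M) : dp B M 0 x = 1 := by
  rw [dp, RingQuot.mkAlgHom_rel B Rel.zero, map_one]
  rfl

lemma dp_add (n : ℕ) (x y : M) :
    dp B M n (x + y) = ∑ ij ∈ antidiagonal n, dp B M ij.1 x * dp B M ij.2 y := by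
  rw [dp, RingQuot.mkAlgHom_rel B Rel.add, map_sum]
  simp only [map_mul]
  rfl

lemma dp_one_mul_dp_one (x y : M) :
    dp B M 1 x * dp B M 1 y = dp B M 2 (x + y) - dp B M 2 x - dp B M 2 y := by
  rw [dp_add, Nat.sum_antidiagonal_eq_sum_range_succ_mk]
  simp [sum_range_succ, dp_zero]

lemma prod_dp_eq_one_of_sum_eq_zero {k : ℕ} (d : Fin k → ℕ) (x : Fin k → M)
    (h : ∑ i, d i = 0) : ∏ i, dp B M (d i) (x i) = 1 :=
  prod_eq_one fun i _ => by rw [sum_eq_zero_iff.mp h i (mem_univ i), dp_zero]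

lemma exists_prod_dp_eq_dp_one_of_sum_eq_one {k : ℕ} (d : Fin k → ℕ) (x : Fin k → M)
    (h : ∑ i, d i = 1) : ∃ y, ∏ i, dp B M (d i) (x i) = dp B M 1 y := by
  induction k with
  | zero => simp at h
  | succ k ih =>
    rw [Fin.sum_univ_succ] at h
    rw [Fin.prod_univ_succ]
    obtain hd | hd : d 0 = 0 ∨ d 0 = 1 := by omega
    · obtain ⟨y, hy⟩ := ih (fun i => d i.succ) (fun i => x i.succ) (by omega)
      exact ⟨y, by rw [hd, dp_zero, one_mul, hy]⟩
    · refine ⟨x 0, ?_⟩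
      rw [prod_dp_eq_one_of_sum_eq_zero _ _ (by omega), mul_one, hd]

lemma prod_dp_mem_span_dp_two_of_sum_eq_two {k : ℕ} (d : Fin k → ℕ) (x : Fin k → M)
    (h : ∑ i, d i = 2) :
    ∏ i, dp B M (d i) (x i) ∈ Submodule.span B {u | ∃ z, u = dp B M 2 z} := by
  have dp_two_mem (z : M) : dp B M 2 z ∈ Submodule.span B {u | ∃ z : M, u = dp B M 2 z} :=
    Submodule.subset_span ⟨z, rfl⟩
  induction k with
  | zero => simp at h
  | succ k ih =>
    rw [Fin.sum_univ_succ] at h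
    rw [Fin.prod_univ_succ]
    obtain hd | hd | hd : d 0 = 0 ∨ d 0 = 1 ∨ d 0 = 2 := by omega
    · rw [hd, dp_zero, one_mul]
      exact ih (fun i => d i.succ) (fun i => x i.succ) (by omega)
    · obtain ⟨y, hy⟩ := exists_prod_dp_eq_dp_one_of_sum_eq_one (B := B)
        (fun i => d i.succ) (fun i => x i.succ) (by omega)
      rw [hd, hy, dp_one_mul_dp_one]
      exact sub_mem (sub_mem (dp_two_mem _) (dp_two_mem _)) (dp_two_mem _)
    · rw [prod_dp_eq_one_of_sum_eq_zero _ _ (by omega), mul_one, hd]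
      exact dp_two_mem _

lemma grade_two_eq_span_dp_two : grade B M 2 = Submodule.span B {u | ∃ z, u = dp B M 2 z} := by
  refine le_antisymm ?_ (Submodule.span_le.mpr ?_)
  · rw [grade, Submodule.span_le]
    rintro _ ⟨k, d, x, hsum, rfl⟩
    exact prod_dp_mem_span_dp_two_of_sum_eq_two d x hsum
  · rintro _ ⟨z, rfl⟩
    exact dp_mem_grade B M 2 z

end DividedPowerAlg

lemma Submodule.span_coe_preimage_eq_top_of_eq_span {R N : Type*} [Semiring R] [AddCommMonoid N]
    [Module R N] {p : Submodule R N} {s : Set N} (h : p = span R s) :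
    span R (((↑) : p → N) ⁻¹' s) = ⊤ := by
  subst h
  exact span_span_coe_preimage

open DividedPowerAlg in
lemma span_dp_le_range_gammaTilde (n : ℕ) :
    Submodule.span B {y : ↥(grade B M n) | ∃ x : M, (y : DividedPowerAlg B M) = dp B M n x} ≤
      LinearMap.range (gammaTilde B M n) := by
  rw [Submodule.span_le]
  rintro y ⟨x, hx⟩
  refine ⟨AddMonoidAlgebra.single x 1, Subtype.ext ?_⟩
  simp [gammaTilde, hx]

open DividedPowerAlg in
theorem grade_two_spanned_by_dp_two_general (B : Type u) [CommRing B] [BinomialRing B]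
    (M : Type u) [AddCommGroup M] [Module B M] :
    Submodule.span B {y : ↥(grade B M 2) | ∃ x : M, (y : DividedPowerAlg B M) = dp B M 2 x}
        = ⊤ ∧
      Function.Surjective (gammaTilde B M 2) ∧
      ∀ h2 : (augIdeal B M 2).restrictScalars B ≤ LinearMap.ker (gammaTilde B M 2),
        Function.Surjective
          (Submodule.liftQ ((augIdeal B M 2).restrictScalars B) (gammaTilde B M 2) h2) := by
  have hspan :=
    Submodule.span_coe_preimage_eq_top_of_eq_span (grade_two_eq_span_dp_two (B := B) (M := M))
  have hsurj : Function.Surjective (gammaTilde B M 2) := by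
    rw [← LinearMap.range_eq_top, eq_top_iff, ← hspan]
    exact span_dp_le_range_gammaTilde B M 2
  refine ⟨hspan, hsurj, fun h2 => ?_⟩
  rw [← LinearMap.range_eq_top, Submodule.range_liftQ, LinearMap.range_eq_top]
  exact hsurj

open DividedPowerAlg in
/-- `Γ^2(M)` is spanned by the divided squares `x^{[2]}`; hence `γ̃_2 : B[M] → Γ^2(M)` and the
induced divided power map `γ_2 : B[M]_2 → Γ^2(M)` are surjective. -/
theorem grade_two_spanned_by_dp_two (B : Type u) [CommRing B] [BinomialRing B]
    (M : Type u) [AddCommGroup M] [Module B M] [Module.Free B M] [Module.Finite B M] :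
    Submodule.span B {y : ↥(grade B M 2) | ∃ x : M, (y : DividedPowerAlg B M) = dp B M 2 x}
        = ⊤ ∧
      Function.Surjective (gammaTilde B M 2) ∧
      ∀ h2 : (augIdeal B M 2).restrictScalars B ≤ LinearMap.ker (gammaTilde B M 2),
        Function.Surjective
          (Submodule.liftQ ((augIdeal B M 2).restrictScalars B) (gammaTilde B M 2) h2) :=
  grade_two_spanned_by_dp_two_general B M
end
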